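/- Fix an integer N ≥ n, β ∈ B, w ∈ (0, 1), and weights p = (p₁, …, pₙ) with each p_i > 0 and Σ_i p_i = 1, and assume f(y_i, x_i; β′) > 0, f(0, x_i; β′) > 0 and f(1, x_i; β′) > 0 for all i and all β′ ∈ B. With v_i, u_i, w⁺, p⁺, β⁺ defined as in the EM iteration (v_i = w f(1, x_i; β)/(1 − w + w f(1, x_i; β)) if y_i = 1 and v_i = 1 otherwise; u_i = (N − n) w f(0, x_i; β) p_i / α with α = w Σ_i f(0, x_i; β) p_i; w⁺ = Σ_i (v_i + u_i)/Σ_i (1 + u_i); p_i⁺ = (u_i + 1)/Σ_j (u_j + 1); β⁺ any maximizer of ℓ₂(β′) = Σ_i [v_i log f(y_i, x_i; β′) + u_i log f(0, x_i; β′)]), let α⁺ = w⁺ Σ_i f(0, x_i; β⁺) p_i⁺ and let N⁺ be any maximizer over integers N′ ≥ n of log C(N′, n) + (N′ − n) log α⁺. Then L_{N⁺}(β⁺, w⁺, p⁺) ≥ L_N(β, w, p); that is, one EM iteration with N updated does not decrease the log empirical likelihood. -/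

import Mathlib

/-!
The EM iteration is a minorize–maximize step. With the posterior weights `v` (a capture at one
comes from `f` rather than from the inflation) and `u` (expected uncaptured individuals per
covariate) computed at the current parameters, Jensen's inequality for `log` gives
`L_N(β', w', p') - L_N(β, w, p) ≥ Q(β', w', p') - Q(β, w, p)` for the expected complete-data
log-likelihood `Q`. The M-step does not decrease `Q`: `β'` maximizes its `β`-part, and `w'`, `p'`
maximize the `w`- and `p`-parts by Gibbs' inequality. Finally, `N'` maximizes the only part of
`L_N(β', w', p')` that depends on `N`.
-/

open Real Finset

theorem mul_log_le_mul_log_div_add_mul_sub {c r C : ℝ} (hc : 0 ≤ c) (hr : 0 < r) (hC : 0 < C) :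
    c * log r ≤ c * log (c / C) + (r * C - c) := by
  rcases hc.eq_or_lt with rfl | hc
  · simp only [zero_mul, zero_div, log_zero, mul_zero, zero_add, sub_zero]
    positivity
  have key := log_le_sub_one_of_pos (show 0 < r * C / c by positivity)
  rw [log_div (by positivity) hc.ne', log_mul hr.ne' hC.ne'] at key
  rw [log_div hc.ne' hC.ne']
  have : c * (r * C / c - 1) = r * C - c := by field_simp
  nlinarith [mul_le_mul_of_nonneg_left key hc.le]

theorem sum_mul_log_le_sum_mul_log_div_sum {ι : Type*} [Fintype ι] (c r : ι → ℝ)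
    (hc : ∀ i, 0 ≤ c i) (hr : ∀ i, 0 < r i) (hr1 : ∑ i, r i = 1) :
    ∑ i, c i * log (r i) ≤ ∑ i, c i * log (c i / ∑ j, c j) := by
  rcases (sum_nonneg fun i _ ↦ hc i).eq_or_lt with hC | hC
  · have hc0 : ∀ i, c i = 0 := fun i ↦
      (sum_eq_zero_iff_of_nonneg fun i _ ↦ hc i).mp hC.symm i (mem_univ i)
    simp [hc0]
  calc ∑ i, c i * log (r i)
      ≤ ∑ i, (c i * log (c i / ∑ j, c j) + (r i * ∑ j, c j - c i)) :=
        sum_le_sum fun i _ ↦ mul_log_le_mul_log_div_add_mul_sub (hc i) (hr i) hC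
    _ = ∑ i, c i * log (c i / ∑ j, c j) := by
        rw [sum_add_distrib, sum_sub_distrib, ← sum_mul, hr1]
        ring

theorem sum_div_sum_mul_log_sub_le {ι : Type*} [Fintype ι] (s s' : ι → ℝ)
    (hs : ∀ i, 0 < s i) (hs' : ∀ i, 0 < s' i) :
    ∑ i, s i / (∑ j, s j) * (log (s' i) - log (s i)) ≤ log (∑ i, s' i) - log (∑ i, s i) := by
  cases isEmpty_or_nonempty ι
  · simp
  have hS : 0 < ∑ j, s j := sum_pos (fun i _ ↦ hs i) univ_nonempty
  have hS' : 0 < ∑ j, s' j := sum_pos (fun i _ ↦ hs' i) univ_nonempty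
  have gibbs := sum_mul_log_le_sum_mul_log_div_sum s (fun i ↦ s' i / ∑ j, s' j)
    (fun i ↦ (hs i).le) (fun i ↦ div_pos (hs' i) hS') (by rw [← sum_div, div_self hS'.ne'])
  simp only [log_div (hs' _).ne' hS'.ne', log_div (hs _).ne' hS.ne', mul_sub,
    sum_sub_distrib, ← sum_mul] at gibbs
  have : ∑ i, s i / (∑ j, s j) * (log (s' i) - log (s i)) =
      (∑ i, s i * log (s' i) - ∑ i, s i * log (s i)) / ∑ j, s j := by
    rw [← sum_sub_distrib, sum_div]
    exact sum_congr rfl fun i _ ↦ by ring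
  rw [this, div_le_iff₀ hS]
  linarith

theorem mul_log_add_mul_log_one_sub_le {a b w : ℝ} (ha : 0 ≤ a) (hb : 0 ≤ b) (hw0 : 0 < w)
    (hw1 : w < 1) :
    a * log w + b * log (1 - w) ≤ a * log (a / (a + b)) + b * log (1 - a / (a + b)) := by
  have gibbs := sum_mul_log_le_sum_mul_log_div_sum ![a, b] ![w, 1 - w]
    (by simp [Fin.forall_fin_two, ha, hb]) (by simp [Fin.forall_fin_two, hw0, hw1])
    (by simp)
  simp only [Fin.sum_univ_two, Matrix.cons_val_zero, Matrix.cons_val_one] at gibbs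
  rcases hb.eq_or_lt with rfl | hb
  · simpa using gibbs
  rwa [one_sub_div (by positivity), add_sub_cancel_left]

theorem mul_log_sub_add_one_sub_mul_log_sub_le {w w' a a' t : ℝ} (hw0 : 0 < w) (hw1 : w < 1)
    (hw'0 : 0 < w') (hw'1 : w' < 1) (ha : 0 < a) (ha' : 0 < a')
    (ht : t = w * a / (1 - w + w * a)) :
    t * (log w' + log a' - (log w + log a)) + (1 - t) * (log (1 - w') - log (1 - w)) ≤
      log (w' * a' + (1 - w')) - log (w * a + (1 - w)) := by
  have em := sum_div_sum_mul_log_sub_le ![w * a, 1 - w] ![w' * a', 1 - w']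
    (by simp [Fin.forall_fin_two, hw1]; positivity) (by simp [Fin.forall_fin_two, hw'1]; positivity)
  simp only [Fin.sum_univ_two, Matrix.cons_val_zero, Matrix.cons_val_one] at em
  have hS : 0 < w * a + (1 - w) := by nlinarith [mul_pos hw0 ha]
  have h1t : 1 - t = (1 - w) / (w * a + (1 - w)) := by
    rw [ht, add_comm (1 - w), one_sub_div hS.ne', add_sub_cancel_left]
  rwa [h1t, ht, add_comm (1 - w), ← log_mul hw0.ne' ha.ne', ← log_mul hw'0.ne' ha'.ne']

theorem div_one_sub_add_mem_Ioo {w a : ℝ} (hw0 : 0 < w) (hw1 : w < 1) (ha : 0 < a) :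
    w * a / (1 - w + w * a) ∈ Set.Ioo 0 1 := by
  have : 0 < w * a := mul_pos hw0 ha
  exact ⟨by positivity, (div_lt_one (by linarith)).mpr (by linarith)⟩

theorem sum_one_add_eq_sum_add_add_sum_one_sub {ι : Type*} [Fintype ι] (v u : ι → ℝ) :
    ∑ i, (1 + u i) = ∑ i, (v i + u i) + ∑ i, (1 - v i) := by
  rw [← sum_add_distrib]
  exact sum_congr rfl fun i _ ↦ by ring

theorem sum_add_div_sum_one_add_pos {ι : Type*} [Fintype ι] [Nonempty ι] {v u : ι → ℝ}
    (hv : ∀ i, 0 < v i) (hu : ∀ i, 0 ≤ u i) : 0 < (∑ i, (v i + u i)) / ∑ i, (1 + u i) :=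
  div_pos (sum_pos (fun i _ ↦ by linarith [hv i, hu i]) univ_nonempty)
    (sum_pos (fun i _ ↦ by linarith [hu i]) univ_nonempty)

theorem sum_add_div_sum_one_add_lt_one {ι : Type*} [Fintype ι] {v u : ι → ℝ}
    (hv1 : ∀ i, v i ≤ 1) (hu : ∀ i, 0 ≤ u i) {j : ι} (hj : v j < 1) :
    (∑ i, (v i + u i)) / ∑ i, (1 + u i) < 1 := by
  have hpos : 0 < ∑ i, (1 + u i) :=
    sum_pos (fun i _ ↦ by linarith [hu i]) ⟨j, mem_univ j⟩
  have : 0 < ∑ i, (1 - v i) :=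
    sum_pos' (fun i _ ↦ by linarith [hv1 i]) ⟨j, mem_univ j, by linarith⟩
  rw [div_lt_one hpos, sum_one_add_eq_sum_add_add_sum_one_sub v]
  linarith

theorem sum_mul_log_sub_le_mul_log_sub {ι : Type*} [Fintype ι] {m w w' : ℝ}
    {g g' p p' u : ι → ℝ} (hm : 0 ≤ m) (hw : 0 < w) (hw' : 0 < w') (hg : ∀ i, 0 < g i)
    (hg' : ∀ i, 0 < g' i) (hp : ∀ i, 0 < p i) (hp' : ∀ i, 0 < p' i)
    (hu : ∀ i, u i = m * w * g i * p i / (w * ∑ j, g j * p j)) :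
    ∑ i, u i * (log w' + log (g' i) + log (p' i) - (log w + log (g i) + log (p i))) ≤
      m * (log (w' * ∑ i, g' i * p' i) - log (w * ∑ i, g i * p i)) := by
  have em := sum_div_sum_mul_log_sub_le (fun i ↦ w * g i * p i) (fun i ↦ w' * g' i * p' i)
    (fun i ↦ by have := hg i; have := hp i; positivity)
    (fun i ↦ by have := hg' i; have := hp' i; positivity)
  simp only [← mul_sum, mul_assoc] at em
  calc ∑ i, u i * (log w' + log (g' i) + log (p' i) - (log w + log (g i) + log (p i)))
      = m * ∑ i, w * (g i * p i) / (w * ∑ j, g j * p j) *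
          (log (w' * (g' i * p' i)) - log (w * (g i * p i))) := by
        rw [mul_sum]
        refine sum_congr rfl fun i _ ↦ ?_
        rw [hu i, log_mul hw.ne' (mul_pos (hg i) (hp i)).ne', log_mul (hg i).ne' (hp i).ne',
          log_mul hw'.ne' (mul_pos (hg' i) (hp' i)).ne', log_mul (hg' i).ne' (hp' i).ne']
        ring
    _ ≤ m * (log (w' * ∑ i, g' i * p' i) - log (w * ∑ i, g i * p i)) :=
        mul_le_mul_of_nonneg_left em hm

/-- The one-inflated pmf `h(k, x; β, w)`, where `a = f(k, x; β)`. -/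
noncomputable def oneInflated (w a : ℝ) (k : ℕ) : ℝ :=
  w * a + (1 - w) * if k = 1 then 1 else 0

theorem le_log_oneInflated_sub_log_oneInflated {k : ℕ} {w w' a a' v : ℝ} (hw0 : 0 < w)
    (hw1 : w < 1) (hw'0 : 0 < w') (hw'1 : k = 1 → w' < 1) (ha : 0 < a) (ha' : 0 < a')
    (hv : v = if k = 1 then w * a / (1 - w + w * a) else 1) :
    v * (log w' + log a' - (log w + log a)) + (1 - v) * (log (1 - w') - log (1 - w)) ≤
      log (oneInflated w' a' k) - log (oneInflated w a k) := by
  by_cases hk : k = 1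
  · simp only [oneInflated, hk, if_true, mul_one] at hv ⊢
    exact mul_log_sub_add_one_sub_mul_log_sub_le hw0 hw1 hw'0 (hw'1 hk) ha ha' hv
  · simp only [oneInflated, hk, hv, if_false, mul_zero, add_zero, sub_self, zero_mul, one_mul,
      log_mul hw0.ne' ha.ne', log_mul hw'0.ne' ha'.ne', le_refl]

section OneInflatedModel

variable {𝒳 B : Type*} {n : ℕ} (x : Fin n → 𝒳) (y : Fin n → ℕ) (f : ℕ → 𝒳 → B → ℝ)

noncomputable def logEmpiricalLikelihood (N : ℕ) (β : B) (w : ℝ) (p : Fin n → ℝ) : ℝ :=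
  log (N.choose n : ℝ) + ((N : ℝ) - n) * log (w * ∑ i, f 0 (x i) β * p i) +
    (∑ i, log (oneInflated w (f (y i) (x i) β) (y i))) + ∑ i, log (p i)

/-- The expected complete-data log-likelihood `Q` of the EM iteration, whose `β`-part is the
paper's `ℓ₂`. -/
noncomputable def emObjective (v u : Fin n → ℝ) (β : B) (w : ℝ) (p : Fin n → ℝ) : ℝ :=
  ∑ i, (v i * (log w + log (f (y i) (x i) β)) + (1 - v i) * log (1 - w) +
    u i * (log w + log (f 0 (x i) β) + log (p i)) + log (p i))

theorem emObjective_eq (v u : Fin n → ℝ) (β : B) (w : ℝ) (p : Fin n → ℝ) :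
    emObjective x y f v u β w p =
      ∑ i, (v i * log (f (y i) (x i) β) + u i * log (f 0 (x i) β)) +
        ((∑ i, (v i + u i)) * log w + (∑ i, (1 - v i)) * log (1 - w)) +
        ∑ i, (u i + 1) * log (p i) := by
  simp only [emObjective, sum_mul, ← sum_add_distrib]
  exact sum_congr rfl fun i _ ↦ by ring

variable {x y f}

theorem emObjective_le_of_mStep {v u : Fin n → ℝ} (hv0 : ∀ i, 0 ≤ v i) (hv1 : ∀ i, v i ≤ 1)
    (hu : ∀ i, 0 ≤ u i) {β β' : B}
    (hβ' : ∑ i, (v i * log (f (y i) (x i) β) + u i * log (f 0 (x i) β)) ≤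
      ∑ i, (v i * log (f (y i) (x i) β') + u i * log (f 0 (x i) β')))
    {w w' : ℝ} (hw0 : 0 < w) (hw1 : w < 1) (hw' : w' = (∑ i, (v i + u i)) / ∑ i, (1 + u i))
    {p p' : Fin n → ℝ} (hp : ∀ i, 0 < p i) (hp1 : ∑ i, p i = 1)
    (hp' : ∀ i, p' i = (u i + 1) / ∑ j, (u j + 1)) :
    emObjective x y f v u β w p ≤ emObjective x y f v u β' w' p' := by
  have hw_step := mul_log_add_mul_log_one_sub_le
    (sum_nonneg fun i (_ : i ∈ univ) ↦ add_nonneg (hv0 i) (hu i))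
    (sum_nonneg fun i (_ : i ∈ univ) ↦ sub_nonneg.mpr (hv1 i)) hw0 hw1
  rw [← sum_one_add_eq_sum_add_add_sum_one_sub, ← hw'] at hw_step
  have hp_step := sum_mul_log_le_sum_mul_log_div_sum (fun i ↦ u i + 1) p
    (fun i ↦ by linarith [hu i]) hp hp1
  simp only [← hp'] at hp_step
  rw [emObjective_eq, emObjective_eq]
  linarith

theorem logEmpiricalLikelihood_add_emObjective_sub_le {N : ℕ} (hN : n ≤ N) {β β' : B}
    {w w' : ℝ} (hw0 : 0 < w) (hw1 : w < 1) (hw'0 : 0 < w') (hw'1 : ∀ i, y i = 1 → w' < 1)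
    {p p' : Fin n → ℝ} (hp : ∀ i, 0 < p i) (hp' : ∀ i, 0 < p' i)
    (hfy : ∀ i, 0 < f (y i) (x i) β) (hfy' : ∀ i, 0 < f (y i) (x i) β')
    (hf0 : ∀ i, 0 < f 0 (x i) β) (hf0' : ∀ i, 0 < f 0 (x i) β')
    {v u : Fin n → ℝ}
    (hv : ∀ i, v i = if y i = 1 then w * f 1 (x i) β / (1 - w + w * f 1 (x i) β) else 1)
    (hu : ∀ i, u i = ((N : ℝ) - n) * w * f 0 (x i) β * p i / (w * ∑ j, f 0 (x j) β * p j)) :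
    logEmpiricalLikelihood x y f N β w p +
        (emObjective x y f v u β' w' p' - emObjective x y f v u β w p) ≤
      logEmpiricalLikelihood x y f N β' w' p' := by
  have observed : ∀ i,
      v i * (log w' + log (f (y i) (x i) β') - (log w + log (f (y i) (x i) β))) +
          (1 - v i) * (log (1 - w') - log (1 - w)) ≤
        log (oneInflated w' (f (y i) (x i) β') (y i)) -
          log (oneInflated w (f (y i) (x i) β) (y i)) :=
    fun i ↦ le_log_oneInflated_sub_log_oneInflated hw0 hw1 hw'0 (hw'1 i) (hfy i) (hfy' i)
      (by rw [hv i]; split_ifs with h <;> simp [h])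
  have unobserved := sum_mul_log_sub_le_mul_log_sub (sub_nonneg.mpr (Nat.cast_le.mpr hN))
    hw0 hw'0 hf0 hf0' hp hp' hu
  have hsplit : emObjective x y f v u β' w' p' - emObjective x y f v u β w p =
      ∑ i, (v i * (log w' + log (f (y i) (x i) β') - (log w + log (f (y i) (x i) β))) +
        (1 - v i) * (log (1 - w') - log (1 - w))) +
      ∑ i, u i * (log w' + log (f 0 (x i) β') + log (p' i) -
        (log w + log (f 0 (x i) β) + log (p i))) +
      (∑ i, log (p' i) - ∑ i, log (p i)) := by
    simp only [emObjective, ← sum_sub_distrib, ← sum_add_distrib]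
    exact sum_congr rfl fun i _ ↦ by ring
  have observed_sum := sum_le_sum fun i (_ : i ∈ univ) ↦ observed i
  rw [sum_sub_distrib] at observed_sum
  rw [hsplit]
  unfold logEmpiricalLikelihood
  linarith

end OneInflatedModel

theorem em_step_monotone_updated_N_general
    {𝒳 B : Type*} (n : ℕ) (x : Fin n → 𝒳) (y : Fin n → ℕ)
    (f : ℕ → 𝒳 → B → ℝ)
    (N : ℕ) (hN : n ≤ N)
    (β : B) (w : ℝ) (hw : w ∈ Set.Ioo (0 : ℝ) 1)
    (p : Fin n → ℝ) (hp : ∀ i, 0 < p i) (hp1 : ∑ i, p i = 1)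
    (hfy : ∀ (i : Fin n) (b : B), 0 < f (y i) (x i) b)
    (hf0 : ∀ (i : Fin n) (b : B), 0 < f 0 (x i) b)
    (hf1 : ∀ (i : Fin n) (b : B), 0 < f 1 (x i) b)
    (α : ℝ) (hα : α = w * ∑ i, f 0 (x i) β * p i)
    (v : Fin n → ℝ)
    (hv : ∀ i, v i =
      if y i = 1 then w * f 1 (x i) β / (1 - w + w * f 1 (x i) β) else 1)
    (u : Fin n → ℝ)
    (hu : ∀ i, u i = ((N : ℝ) - n) * w * f 0 (x i) β * p i / α)
    (w' : ℝ) (hw' : w' = (∑ i, (v i + u i)) / (∑ i, (1 + u i)))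
    (p' : Fin n → ℝ) (hp' : ∀ i, p' i = (u i + 1) / ∑ j, (u j + 1))
    (β' : B)
    (hβ' : ∀ b : B,
      (∑ i, (v i * Real.log (f (y i) (x i) b) + u i * Real.log (f 0 (x i) b))) ≤
        ∑ i, (v i * Real.log (f (y i) (x i) β') + u i * Real.log (f 0 (x i) β')))
    (α' : ℝ) (hα' : α' = w' * ∑ i, f 0 (x i) β' * p' i)
    (N' : ℕ)
    (hN'max : ∀ M : ℕ, n ≤ M →
      Real.log (M.choose n : ℝ) + ((M : ℝ) - n) * Real.log α' ≤
        Real.log (N'.choose n : ℝ) + ((N' : ℝ) - n) * Real.log α') :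
    Real.log (N.choose n : ℝ) + ((N : ℝ) - n) * Real.log α +
        (∑ i, Real.log (w * f (y i) (x i) β + (1 - w) * (if y i = 1 then 1 else 0))) +
        (∑ i, Real.log (p i)) ≤
      Real.log (N'.choose n : ℝ) + ((N' : ℝ) - n) * Real.log α' +
        (∑ i, Real.log (w' * f (y i) (x i) β' + (1 - w') * (if y i = 1 then 1 else 0))) +
        (∑ i, Real.log (p' i)) := by
  obtain ⟨hw0, hw1⟩ := hw
  subst hα hα'
  have : Nonempty (Fin n) := ⟨⟨0, Nat.pos_of_ne_zero (by rintro rfl; simp at hp1)⟩⟩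
  have hv_mem : ∀ i, 0 < v i ∧ v i ≤ 1 ∧ (y i = 1 → v i < 1) := fun i ↦ by
    have := div_one_sub_add_mem_Ioo hw0 hw1 (hf1 i β)
    rw [hv i]
    split_ifs with h
    · exact ⟨this.1, this.2.le, fun _ ↦ this.2⟩
    · exact ⟨one_pos, le_rfl, fun h' ↦ absurd h' h⟩
  have hu0 : ∀ i, 0 ≤ u i := fun i ↦ by
    have : (0 : ℝ) ≤ N - n := sub_nonneg.mpr (Nat.cast_le.mpr hN)
    have : 0 < ∑ j, f 0 (x j) β * p j :=
      sum_pos (fun j _ ↦ mul_pos (hf0 j β) (hp j)) univ_nonempty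
    have := hf0 i β; have := hp i
    rw [hu i]
    positivity
  have hw'0 : 0 < w' :=
    hw' ▸ sum_add_div_sum_one_add_pos (fun i ↦ (hv_mem i).1) hu0
  have hw'1 : ∀ i, y i = 1 → w' < 1 := fun i h ↦
    hw' ▸ sum_add_div_sum_one_add_lt_one (fun i ↦ (hv_mem i).2.1) hu0 ((hv_mem i).2.2 h)
  have hp'0 : ∀ i, 0 < p' i := fun i ↦ by
    rw [hp' i]
    exact div_pos (by linarith [hu0 i]) (sum_pos (fun j _ ↦ by linarith [hu0 j]) univ_nonempty)
  have mStep := emObjective_le_of_mStep (fun i ↦ (hv_mem i).1.le) (fun i ↦ (hv_mem i).2.1) hu0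
    (hβ' β) hw0 hw1 hw' hp hp1 hp'
  have minorization := logEmpiricalLikelihood_add_emObjective_sub_le hN hw0 hw1 hw'0 hw'1 hp hp'0
    (fun i ↦ hfy i β) (fun i ↦ hfy i β') (fun i ↦ hf0 i β) (fun i ↦ hf0 i β') hv hu
  show logEmpiricalLikelihood x y f N β w p ≤ logEmpiricalLikelihood x y f N' β' w' p'
  calc logEmpiricalLikelihood x y f N β w p ≤ logEmpiricalLikelihood x y f N β' w' p' := by
        linarith
    _ ≤ logEmpiricalLikelihood x y f N' β' w' p' := by
        unfold logEmpiricalLikelihood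
        linarith [hN'max N hN]

/-- Theorem 1(b): one EM iteration in which the population size `N` is also updated
does not decrease the log empirical likelihood
`L_N(β, w, p) = log C(N, n) + (N − n) log α(β, w, p)
  + Σᵢ log h(yᵢ, xᵢ; β, w) + Σᵢ log pᵢ`,
where `h(y, x; β, w) = w f(y, x; β) + (1 − w)·1{y = 1}` and
`α(β, w, p) = w Σᵢ f(0, xᵢ; β) pᵢ`. -/
theorem em_step_monotone_updated_N
    {𝒳 B : Type*} (n : ℕ) (x : Fin n → 𝒳) (y : Fin n → ℕ) (hy : ∀ i, 1 ≤ y i)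
    (f : ℕ → 𝒳 → B → ℝ)
    (hf_nonneg : ∀ (k : ℕ) (ξ : 𝒳) (b : B), 0 ≤ f k ξ b)
    (hf_pmf : ∀ (ξ : 𝒳) (b : B), ∑' k : ℕ, f k ξ b = 1)
    (N : ℕ) (hN : n ≤ N)
    (β : B) (w : ℝ) (hw : w ∈ Set.Ioo (0 : ℝ) 1)
    (p : Fin n → ℝ) (hp : ∀ i, 0 < p i) (hp1 : ∑ i, p i = 1)
    (hfy : ∀ (i : Fin n) (b : B), 0 < f (y i) (x i) b)
    (hf0 : ∀ (i : Fin n) (b : B), 0 < f 0 (x i) b)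
    (hf1 : ∀ (i : Fin n) (b : B), 0 < f 1 (x i) b)
    (α : ℝ) (hα : α = w * ∑ i, f 0 (x i) β * p i)
    (v : Fin n → ℝ)
    (hv : ∀ i, v i =
      if y i = 1 then w * f 1 (x i) β / (1 - w + w * f 1 (x i) β) else 1)
    (u : Fin n → ℝ)
    (hu : ∀ i, u i = ((N : ℝ) - n) * w * f 0 (x i) β * p i / α)
    (w' : ℝ) (hw' : w' = (∑ i, (v i + u i)) / (∑ i, (1 + u i)))
    (p' : Fin n → ℝ) (hp' : ∀ i, p' i = (u i + 1) / ∑ j, (u j + 1))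
    (β' : B)
    (hβ' : ∀ b : B,
      (∑ i, (v i * Real.log (f (y i) (x i) b) + u i * Real.log (f 0 (x i) b))) ≤
        ∑ i, (v i * Real.log (f (y i) (x i) β') + u i * Real.log (f 0 (x i) β')))
    (α' : ℝ) (hα' : α' = w' * ∑ i, f 0 (x i) β' * p' i)
    (N' : ℕ) (hN' : n ≤ N')
    (hN'max : ∀ M : ℕ, n ≤ M →
      Real.log (M.choose n : ℝ) + ((M : ℝ) - n) * Real.log α' ≤
        Real.log (N'.choose n : ℝ) + ((N' : ℝ) - n) * Real.log α') :
    Real.log (N.choose n : ℝ) + ((N : ℝ) - n) * Real.log α +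
        (∑ i, Real.log (w * f (y i) (x i) β + (1 - w) * (if y i = 1 then 1 else 0))) +
        (∑ i, Real.log (p i)) ≤
      Real.log (N'.choose n : ℝ) + ((N' : ℝ) - n) * Real.log α' +
        (∑ i, Real.log (w' * f (y i) (x i) β' + (1 - w') * (if y i = 1 then 1 else 0))) +
        (∑ i, Real.log (p' i)) :=
  em_step_monotone_updated_N_general n x y f N hN β w hw p hp hp1 hfy hf0 hf1 α hα v hv u hu w' hw'
    p' hp' β' hβ' α' hα' N' hN'max
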